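/- Let m ≥ 1, n ≥ 0 be integers and x, y, ξ, η ∈ ℂ with x ≠ 0, Re(ξ/x) < 1, Im(η − ξy/x) > 0, and i(y + kx) ∉ [0,∞) for every k ∈ ℤ. Then the function u ↦ J_{m,n}(u x, u y, ξ, η) (for real u near 1) is differentiable at u = 1, with derivative (x∂_x + y∂_y) J_{m,n}(x,y,ξ,η) = (n+1) · J_{m,n}(x,y,ξ,η) − 2π · J_{m−1,n+1}(x,y,ξ,η). -/

import Mathlib

open MeasureTheory Real Filter

/-- The polylogarithm `Li_p(w) = ∑_{j ≥ 1} w^j / j^p`, for integer index `p`. -/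
noncomputable def Li (p : ℤ) (w : ℂ) : ℂ := ∑' j : ℕ, w ^ (j + 1) / ((j : ℂ) + 1) ^ p

/-- The integrand in the definition of `J_{m,n}(x,y,ξ,η)`. -/
noncomputable def Jfun (m n : ℕ) (x y ξ η : ℂ) (s : ℝ) : ℂ :=
  (s : ℂ) ^ n *
      Li m (Complex.exp (-(2 * (π : ℂ)) * (1 - ξ / x) * s +
        2 * (π : ℂ) * Complex.I * (η - ξ * y / x))) /
    Complex.tanh ((π : ℂ) * ((s : ℂ) - Complex.I * y) / x)

/-- The function `J_{m,n}(x,y,ξ,η)`. -/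
noncomputable def J (m n : ℕ) (x y ξ η : ℂ) : ℂ :=
  (-1 : ℂ) ^ (n + m + 1) * ∫ s in Set.Ioi (0 : ℝ), Jfun m n x y ξ η s

/-- The nonnegative real axis `[0,∞)` viewed as a subset of `ℂ`. -/
def nonnegRealAxis : Set ℂ := {z : ℂ | ∃ r : ℝ, 0 ≤ r ∧ z = r}

/-!
The substitution `s = u τ` turns `J_{m,n}(u x, u y, ξ, η)` into `(-1)^{n+m+1} u^{n+1}` times
`∫_0^∞ τ^n Li_m(exp(-2π(u - ξ/x)τ + 2πi(η - ξy/x))) / tanh(π(τ - iy)/x) dτ`, in which `u` only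
enters through the exponent. Since `d/dz Li_p(e^z) = Li_{p-1}(e^z)` for `Re z < 0`, differentiating
under the integral sign gives the formula. Domination for `u` near `1` comes from
`|Li_p(w)| ≤ |w| / (1 - |w|)` and from the boundedness of `1 / tanh(π(τ - iy)/x)` on `τ ≥ 0`:
the hypothesis on `i(y + kx)` says exactly that `exp(2π(τ - iy)/x) ≠ 1` there, and as `τ → ∞` this
exponential tends to `0` or to `∞`, or runs periodically around a circle.
-/

namespace Li

noncomputable def term (p : ℤ) (j : ℕ) (w : ℂ) : ℂ := w ^ (j + 1) / ((j : ℂ) + 1) ^ p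

theorem norm_term (p : ℤ) (j : ℕ) (w : ℂ) :
    ‖term p j w‖ = ‖w‖ ^ (j + 1) / ((j : ℝ) + 1) ^ p := by
  rw [term, norm_div, norm_pow, norm_zpow]
  norm_cast

theorem norm_term_le {p : ℤ} {k : ℕ} (hk : -p ≤ k) (j : ℕ) (w : ℂ) :
    ‖term p j w‖ ≤ ((j : ℝ) + 1) ^ k * ‖w‖ ^ (j + 1) := by
  have hj : (1 : ℝ) ≤ (j : ℝ) + 1 := by linarith [j.cast_nonneg (α := ℝ)]
  rw [norm_term, div_eq_inv_mul, ← zpow_neg, ← zpow_natCast]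
  gcongr
  exact zpow_le_zpow_right₀ hj hk

theorem summable_natCast_add_one_pow_mul_pow_succ {r : ℝ} (hr : 0 ≤ r) (hr1 : r < 1) (k : ℕ) :
    Summable fun j : ℕ => ((j : ℝ) + 1) ^ k * r ^ (j + 1) := by
  have h := summable_pow_mul_geometric_of_norm_lt_one k (r := r) (by rwa [Real.norm_of_nonneg hr])
  exact_mod_cast (summable_nat_add_iff 1).2 h

theorem summable_term (p : ℤ) {w : ℂ} (hw : ‖w‖ < 1) : Summable fun j => term p j w :=
  .of_norm_bounded (summable_natCast_add_one_pow_mul_pow_succ (norm_nonneg w) hw (-p).toNat)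
    (norm_term_le (Int.self_le_toNat _) · w)

theorem norm_le {p : ℤ} (hp : 0 ≤ p) {w : ℂ} (hw : ‖w‖ < 1) : ‖Li p w‖ ≤ ‖w‖ / (1 - ‖w‖) := by
  have hbound (j : ℕ) : ‖term p j w‖ ≤ ‖w‖ ^ (j + 1) := by
    simpa using norm_term_le (k := 0) (by simpa using hp) j w
  have hgeom : HasSum (fun j : ℕ => ‖w‖ ^ (j + 1)) (‖w‖ / (1 - ‖w‖)) := by
    simpa [pow_succ', div_eq_mul_inv] using
      (hasSum_geometric_of_lt_one (norm_nonneg w) hw).mul_left ‖w‖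
  calc ‖Li p w‖ ≤ ∑' j, ‖w‖ ^ (j + 1) :=
        tsum_of_norm_bounded hgeom.summable.hasSum hbound
    _ = ‖w‖ / (1 - ‖w‖) := hgeom.tsum_eq

theorem term_sub_one (p : ℤ) (j : ℕ) (w : ℂ) :
    term (p - 1) j w = ((j : ℂ) + 1) * term p j w := by
  have := Nat.cast_add_one_ne_zero (R := ℂ) j
  rw [term, term, zpow_sub_one₀ this]
  field_simp

theorem hasDerivAt_term_exp (p : ℤ) (j : ℕ) (z : ℂ) :
    HasDerivAt (fun w => term p j (Complex.exp w)) (term (p - 1) j (Complex.exp z)) z := by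
  refine (((Complex.hasDerivAt_exp z).pow (j + 1)).div_const (((j : ℂ) + 1) ^ p)).congr_deriv ?_
  rw [term_sub_one, term]
  push_cast
  ring

end Li

open Li in
theorem hasDerivAt_Li_exp (p : ℤ) {z : ℂ} (hz : z.re < 0) :
    HasDerivAt (fun w => Li p (Complex.exp w)) (Li (p - 1) (Complex.exp z)) z := by
  set r := Real.exp (z.re / 2)
  have hr : r < 1 := Real.exp_lt_one_iff.2 (by linarith)
  set U := {w : ℂ | w.re < z.re / 2}
  have hzU : z ∈ U := show z.re < z.re / 2 by linarith
  have hbound (j : ℕ) (w : ℂ) (hw : w ∈ U) :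
      ‖term (p - 1) j (Complex.exp w)‖ ≤ ((j : ℝ) + 1) ^ (1 - p).toNat * r ^ (j + 1) := by
    have hk : -(p - 1) ≤ (1 - p).toNat := by have := Int.self_le_toNat (1 - p); omega
    refine (norm_term_le hk j _).trans ?_
    rw [Complex.norm_exp]
    exact mul_le_mul_of_nonneg_left
      (pow_le_pow_left₀ (Real.exp_nonneg _) (Real.exp_le_exp.2 (le_of_lt hw)) _) (by positivity)
  exact hasDerivAt_tsum_of_isPreconnected
    (summable_natCast_add_one_pow_mul_pow_succ (Real.exp_nonneg _) hr _)
    (isOpen_lt Complex.continuous_re continuous_const) (convex_halfSpace_re_lt _).isPreconnected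
    (fun j w _ => hasDerivAt_term_exp p j w) hbound hzU
    (summable_term p (by rwa [Complex.norm_exp, Real.exp_lt_one_iff])) hzU

section InvTanhBound

open Set Function

theorem exists_pos_forall_le_of_eventually_le {g : ℝ → ℝ} (hg : ContinuousOn g (Ici 0))
    (hpos : ∀ t, 0 ≤ t → 0 < g t) {c : ℝ} (hc : 0 < c) (hev : ∀ᶠ t in atTop, c ≤ g t) :
    ∃ δ > 0, ∀ t, 0 ≤ t → δ ≤ g t := by
  obtain ⟨T, hT⟩ := eventually_atTop.1 hev
  obtain ⟨t₀, ht₀, hmin⟩ := isCompact_Icc.exists_isMinOn (nonempty_Icc.2 (le_max_left 0 T))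
    (hg.mono Icc_subset_Ici_self)
  refine ⟨min c (g t₀), lt_min hc (hpos t₀ ht₀.1), fun t ht => ?_⟩
  rcases le_total t (max 0 T) with h | h
  · exact (min_le_right _ _).trans (hmin ⟨ht, h⟩)
  · exact (min_le_left _ _).trans (hT t ((le_max_right _ _).trans h))

theorem Function.Periodic.exists_pos_forall_le {g : ℝ → ℝ} {c : ℝ} (hper : Periodic g c)
    (hc : 0 < c) (hg : Continuous g) (hpos : ∀ t, 0 ≤ t → 0 < g t) :
    ∃ δ > 0, ∀ t, δ ≤ g t := by
  obtain ⟨t₀, ht₀, hmin⟩ := isCompact_Icc.exists_isMinOn (nonempty_Icc.2 hc.le) hg.continuousOn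
  refine ⟨g t₀, hpos t₀ ht₀.1, fun t => ?_⟩
  obtain ⟨t', ht', hgt⟩ := hper.exists_mem_Ico₀ hc t
  exact hgt ▸ hmin (Ico_subset_Icc_self ht')

theorem half_le_abs_exp_sub_one {s : ℝ} (hs : Real.log 2 ≤ |s|) : 1 / 2 ≤ |Real.exp s - 1| := by
  rcases le_abs'.1 hs with hs | hs
  · have : Real.exp s ≤ 1 / 2 := by
      calc Real.exp s ≤ Real.exp (-Real.log 2) := Real.exp_le_exp.2 hs
        _ = 1 / 2 := by rw [Real.exp_neg, Real.exp_log two_pos, one_div]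
    rw [abs_sub_comm, abs_of_pos (by linarith)]
    linarith
  · have : 2 ≤ Real.exp s := by
      calc 2 = Real.exp (Real.log 2) := (Real.exp_log two_pos).symm
        _ ≤ Real.exp s := Real.exp_le_exp.2 hs
    rw [abs_of_pos (by linarith)]
    linarith

theorem exists_pos_le_norm_exp_sub_one (a b : ℂ)
    (h : ∀ t : ℝ, 0 ≤ t → Complex.exp (a * t + b) ≠ 1) :
    ∃ δ > 0, ∀ t : ℝ, 0 ≤ t → δ ≤ ‖Complex.exp (a * t + b) - 1‖ := by
  set g := fun t : ℝ => ‖Complex.exp (a * t + b) - 1‖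
  have hg : Continuous g := by fun_prop
  have hpos (t : ℝ) (ht : 0 ≤ t) : 0 < g t := norm_pos_iff.2 (sub_ne_zero.2 (h t ht))
  by_cases ha : a.re = 0
  · obtain ⟨c, hc, hac⟩ : ∃ c : ℝ, 0 < c ∧ Complex.exp (a * c) = 1 := by
      obtain ⟨α, rfl⟩ : ∃ α : ℝ, a = α * Complex.I := ⟨a.im, Complex.ext (by simp [ha]) (by simp)⟩
      by_cases hα : α = 0
      · exact ⟨1, one_pos, by simp [hα]⟩
      refine ⟨2 * π / |α|, by positivity, ?_⟩
      have hα' : (α : ℂ) ≠ 0 := by exact_mod_cast hα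
      rcases abs_cases α with ⟨habs, _⟩ | ⟨habs, _⟩
      · rw [habs, show (α : ℂ) * Complex.I * ((2 * π / α : ℝ) : ℂ) = 2 * π * Complex.I by
          push_cast; field_simp, Complex.exp_two_pi_mul_I]
      · rw [habs, show (α : ℂ) * Complex.I * ((2 * π / -α : ℝ) : ℂ) = -(2 * π * Complex.I) by
          push_cast; field_simp, Complex.exp_neg, Complex.exp_two_pi_mul_I, inv_one]
    have hper : Periodic g c := fun t => by
      simp only [g]
      rw [Complex.ofReal_add, show a * (t + c) + b = a * t + b + a * c by ring, Complex.exp_add,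
        hac, mul_one]
    obtain ⟨δ, hδ, hle⟩ := hper.exists_pos_forall_le hc hg hpos
    exact ⟨δ, hδ, fun t _ => hle t⟩
  · refine exists_pos_forall_le_of_eventually_le hg.continuousOn hpos one_half_pos ?_
    filter_upwards [eventually_ge_atTop ((Real.log 2 + |b.re|) / |a.re|)] with t ht
    have ht' := (div_le_iff₀' (abs_pos.2 ha)).1 ht
    have hs : Real.log 2 ≤ |a.re * t + b.re| := by
      have := abs_sub_abs_le_abs_sub (a.re * t) (-b.re)
      rw [abs_mul, abs_neg, sub_neg_eq_add] at this
      nlinarith [le_abs_self t, abs_nonneg a.re]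
    calc 1 / 2 ≤ |Real.exp (a.re * t + b.re) - 1| := half_le_abs_exp_sub_one hs
      _ = |‖Complex.exp (a * t + b)‖ - ‖(1 : ℂ)‖| := by simp [Complex.norm_exp]
      _ ≤ g t := abs_norm_sub_norm_le _ _

theorem Complex.inv_tanh_eq (w : ℂ) :
    (Complex.tanh w)⁻¹ = (Complex.exp (2 * w) + 1) / (Complex.exp (2 * w) - 1) := by
  have hw := Complex.exp_ne_zero w
  rw [Complex.tanh_eq_sinh_div_cosh, inv_div, Complex.cosh, Complex.sinh, div_div_div_cancel_right₀
    two_ne_zero, ← mul_div_mul_left _ _ hw, two_mul, Complex.exp_add, Complex.exp_neg]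
  field_simp

theorem norm_add_one_div_sub_one_le {E : ℂ} {δ : ℝ} (hδ : 0 < δ) (hE : δ ≤ ‖E - 1‖) :
    ‖(E + 1) / (E - 1)‖ ≤ 1 + 2 / δ := by
  have hE0 : E - 1 ≠ 0 := norm_pos_iff.1 (hδ.trans_le hE)
  calc ‖(E + 1) / (E - 1)‖ = ‖1 + 2 / (E - 1)‖ := by congr 1; field_simp; ring
    _ ≤ 1 + 2 / ‖E - 1‖ := by simpa using norm_add_le (1 : ℂ) (2 / (E - 1))
    _ ≤ 1 + 2 / δ := by gcongr

theorem exists_norm_inv_tanh_le (a b : ℂ)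
    (h : ∀ t : ℝ, 0 ≤ t → Complex.exp (2 * (a * t + b)) ≠ 1) :
    ∃ C, ∀ t : ℝ, 0 ≤ t → ‖(Complex.tanh (a * t + b))⁻¹‖ ≤ C := by
  simp only [mul_add, ← mul_assoc] at h
  obtain ⟨δ, hδ, hle⟩ := exists_pos_le_norm_exp_sub_one (2 * a) (2 * b) h
  refine ⟨1 + 2 / δ, fun t ht => ?_⟩
  rw [Complex.inv_tanh_eq, mul_add, ← mul_assoc]
  exact norm_add_one_div_sub_one_le hδ (hle t ht)

end InvTanhBound

section ParametricIntegral

open Set Topology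

variable {a : ℝ} {ζ K : ℂ}

theorem re_affine_exponent (u t : ℝ) :
    (-(a : ℂ) * ((u : ℂ) - ζ) * t + K).re = -(a * (u - ζ.re)) * t + K.re := by
  simp

theorem norm_Li_exp_affine_le {q : ℤ} (hq : 0 ≤ q) (hK : K.re < 0) {ε u t : ℝ} (hε : 0 ≤ ε)
    (hu : ε ≤ a * (u - ζ.re)) (ht : 0 ≤ t) :
    ‖Li q (Complex.exp (-(a : ℂ) * ((u : ℂ) - ζ) * t + K))‖ ≤
      Real.exp (-ε * t) / (1 - Real.exp K.re) := by
  set w := Complex.exp (-(a : ℂ) * ((u : ℂ) - ζ) * t + K)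
  have hw : ‖w‖ ≤ Real.exp (-ε * t) * Real.exp K.re := by
    rw [Complex.norm_exp, re_affine_exponent, ← Real.exp_add]
    gcongr
  have hr : Real.exp K.re < 1 := Real.exp_lt_one_iff.2 hK
  have hεt : Real.exp (-ε * t) ≤ 1 := Real.exp_le_one_iff.2 (by nlinarith)
  have hwr : ‖w‖ ≤ Real.exp K.re := hw.trans (mul_le_of_le_one_left (Real.exp_nonneg _) hεt)
  calc ‖Li q w‖ ≤ ‖w‖ / (1 - ‖w‖) := Li.norm_le hq (hwr.trans_lt hr)
    _ ≤ Real.exp (-ε * t) / (1 - Real.exp K.re) := by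
      gcongr
      exact hw.trans (mul_le_of_le_one_right (Real.exp_nonneg _) hr.le)

theorem hasDerivAt_Li_exp_affine (p : ℤ) (hK : K.re < 0) {u t : ℝ} (hu : 0 < a * (u - ζ.re))
    (ht : 0 ≤ t) :
    HasDerivAt (fun v : ℝ => Li p (Complex.exp (-(a : ℂ) * ((v : ℂ) - ζ) * t + K)))
      (-(a : ℂ) * t * Li (p - 1) (Complex.exp (-(a : ℂ) * ((u : ℂ) - ζ) * t + K))) u := by
  have hre : (-(a : ℂ) * ((u : ℂ) - ζ) * t + K).re < 0 := by
    rw [re_affine_exponent]; nlinarith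
  have hlin : HasDerivAt (fun v : ℝ => -(a : ℂ) * ((v : ℂ) - ζ) * t + K) (-(a : ℂ) * t) u := by
    simpa using ((((hasDerivAt_id (u : ℂ)).sub_const ζ).const_mul (-(a : ℂ))).mul_const
      (t : ℂ)).add_const K |>.comp_ofReal
  rw [mul_comm]
  exact (hasDerivAt_Li_exp p hre).comp u hlin

theorem continuousOn_Li_exp_affine (p : ℤ) (hK : K.re < 0) {u : ℝ} (hu : 0 < a * (u - ζ.re)) :
    ContinuousOn (fun t : ℝ => Li p (Complex.exp (-(a : ℂ) * ((u : ℂ) - ζ) * t + K))) (Ici 0) :=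
  fun t ht => by
    have hre : (-(a : ℂ) * ((u : ℂ) - ζ) * t + K).re < 0 := by
      rw [re_affine_exponent]; nlinarith [mem_Ici.1 ht]
    exact ((hasDerivAt_Li_exp p hre).continuousAt.comp
      (f := fun t : ℝ => -(a : ℂ) * ((u : ℂ) - ζ) * t + K) (by fun_prop)).continuousWithinAt

theorem norm_pow_mul_Li_exp_affine_mul_le {q : ℤ} (hq : 0 ≤ q) (k : ℕ) {g : ℝ → ℂ} {C : ℝ}
    (hgC : ∀ t, 0 < t → ‖g t‖ ≤ C) (hK : K.re < 0) {ε u t : ℝ} (hε : 0 ≤ ε)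
    (hu : ε ≤ a * (u - ζ.re)) (ht : 0 < t) :
    ‖(t : ℂ) ^ k * Li q (Complex.exp (-(a : ℂ) * ((u : ℂ) - ζ) * t + K)) * g t‖ ≤
      C / (1 - Real.exp K.re) * (t ^ k * Real.exp (-ε * t)) := by
  have hr : Real.exp K.re < 1 := Real.exp_lt_one_iff.2 hK
  rw [norm_mul, norm_mul, norm_pow, Complex.norm_real, Real.norm_of_nonneg ht.le]
  calc t ^ k * ‖Li q (Complex.exp (-(a : ℂ) * ((u : ℂ) - ζ) * t + K))‖ * ‖g t‖
      ≤ t ^ k * (Real.exp (-ε * t) / (1 - Real.exp K.re)) * C := by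
        gcongr
        · exact norm_Li_exp_affine_le hq hK hε hu ht.le
        · exact hgC t ht
    _ = C / (1 - Real.exp K.re) * (t ^ k * Real.exp (-ε * t)) := by ring

theorem integrableOn_pow_mul_exp_neg_mul (k : ℕ) {ε : ℝ} (hε : 0 < ε) :
    IntegrableOn (fun t : ℝ => t ^ k * Real.exp (-ε * t)) (Ioi 0) := by
  simpa [Real.rpow_natCast] using integrableOn_rpow_mul_exp_neg_mul_rpow (s := k) (p := 1)
    (by linarith [k.cast_nonneg (α := ℝ)]) one_pos hε

theorem hasDerivAt_integral_pow_mul_Li_exp_affine {p : ℤ} (hp : 1 ≤ p) (n : ℕ) {g : ℝ → ℂ}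
    (hg : AEStronglyMeasurable g (volume.restrict (Ioi 0))) {C : ℝ}
    (hgC : ∀ t, 0 < t → ‖g t‖ ≤ C) (hK : K.re < 0) {u₀ : ℝ} (hu₀ : 0 < a * (u₀ - ζ.re)) :
    HasDerivAt (fun u : ℝ => ∫ t : ℝ in Ioi 0,
        (t : ℂ) ^ n * Li p (Complex.exp (-(a : ℂ) * ((u : ℂ) - ζ) * t + K)) * g t)
      (-(a : ℂ) * ∫ t : ℝ in Ioi 0,
        (t : ℂ) ^ (n + 1) * Li (p - 1) (Complex.exp (-(a : ℂ) * ((u₀ : ℂ) - ζ) * t + K)) * g t)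
      u₀ := by
  set ε := a * (u₀ - ζ.re) / 2
  have hε : 0 < ε := by positivity
  set s := {u : ℝ | ε < a * (u - ζ.re)}
  have hs : s ∈ 𝓝 u₀ :=
    (isOpen_lt continuous_const (by fun_prop)).mem_nhds (show a * (u₀ - ζ.re) / 2 < _ by linarith)
  have hmeas (q : ℤ) (k : ℕ) {u : ℝ} (hu : u ∈ s) : AEStronglyMeasurable
      (fun t : ℝ => (t : ℂ) ^ k * Li q (Complex.exp (-(a : ℂ) * ((u : ℂ) - ζ) * t + K)) * g t)
      (volume.restrict (Ioi 0)) :=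
    (((Complex.continuous_ofReal.pow k).continuousOn.mul (continuousOn_Li_exp_affine q hK
      (hε.trans hu))).mono Ioi_subset_Ici_self |>.aestronglyMeasurable measurableSet_Ioi).mul hg
  have hbound (q : ℤ) (hq : 0 ≤ q) (k : ℕ) : ∀ᵐ t : ℝ ∂(volume.restrict (Ioi 0)), ∀ u ∈ s,
      ‖(t : ℂ) ^ k * Li q (Complex.exp (-(a : ℂ) * ((u : ℂ) - ζ) * t + K)) * g t‖ ≤
        C / (1 - Real.exp K.re) * (t ^ k * Real.exp (-ε * t)) :=
    (ae_restrict_iff' measurableSet_Ioi).2 <| .of_forall fun t ht u hu =>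
      norm_pow_mul_Li_exp_affine_mul_le hq k hgC hK hε.le (le_of_lt hu) ht
  have hint (k : ℕ) := (integrableOn_pow_mul_exp_neg_mul k hε).const_mul (C / (1 - Real.exp K.re))
  rw [← integral_const_mul]
  refine (hasDerivAt_integral_of_dominated_loc_of_deriv_le (F' := fun u t => -(a : ℂ) *
    ((t : ℂ) ^ (n + 1) * Li (p - 1) (Complex.exp (-(a : ℂ) * ((u : ℂ) - ζ) * t + K)) * g t)) hs
    (Filter.mem_of_superset hs fun u hu => hmeas p n hu)
    ((hint n).mono' (hmeas p n (mem_of_mem_nhds hs)) ((hbound p (by omega) n).mono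
      fun t ht => ht u₀ (mem_of_mem_nhds hs)))
    ((hmeas (p - 1) (n + 1) (mem_of_mem_nhds hs)).const_mul _)
    ((hbound (p - 1) (by omega) (n + 1)).mono fun t ht u hu => ?_) ((hint (n + 1)).const_mul |a|)
    ((ae_restrict_iff' measurableSet_Ioi).2 <| .of_forall fun t ht u hu => ?_)).2
  · rw [norm_mul, norm_neg, Complex.norm_real, Real.norm_eq_abs]
    exact mul_le_mul_of_nonneg_left (ht u hu) (abs_nonneg a)
  · refine (((hasDerivAt_Li_exp_affine p hK (hε.trans hu) (le_of_lt ht)).const_mul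
      ((t : ℂ) ^ n)).mul_const (g t)).congr_deriv ?_
    ring

section Rescaling

open Set

theorem Jfun_mul_mul_apply_mul (m n : ℕ) {x : ℂ} (hx : x ≠ 0) (y ξ η : ℂ) {u : ℝ} (hu : u ≠ 0)
    (τ : ℝ) :
    Jfun m n (u * x) (u * y) ξ η (u * τ) = (u : ℂ) ^ n * ((τ : ℂ) ^ n *
      Li m (Complex.exp (-((2 * π : ℝ) : ℂ) * ((u : ℂ) - ξ / x) * τ +
        2 * π * Complex.I * (η - ξ * y / x))) *
      (Complex.tanh (π * (τ - Complex.I * y) / x))⁻¹) := by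
  have hu' : (u : ℂ) ≠ 0 := Complex.ofReal_ne_zero.2 hu
  have hexp : -(2 * (π : ℂ)) * (1 - ξ / (u * x)) * ((u * τ : ℝ) : ℂ) +
      2 * π * Complex.I * (η - ξ * (u * y) / (u * x)) =
      -((2 * π : ℝ) : ℂ) * ((u : ℂ) - ξ / x) * τ + 2 * π * Complex.I * (η - ξ * y / x) := by
    push_cast
    field_simp
  have htanh : (π : ℂ) * (((u * τ : ℝ) : ℂ) - Complex.I * (u * y)) / (u * x) =
      π * (τ - Complex.I * y) / x := by
    push_cast
    field_simp
  rw [Jfun, hexp, htanh, div_eq_mul_inv, Complex.ofReal_mul, mul_pow]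
  ring

theorem J_mul_mul (m n : ℕ) {x : ℂ} (hx : x ≠ 0) (y ξ η : ℂ) {u : ℝ} (hu : 0 < u) :
    J m n (u * x) (u * y) ξ η = (-1) ^ (n + m + 1) * ((u : ℂ) ^ (n + 1) *
      ∫ τ : ℝ in Ioi 0, (τ : ℂ) ^ n *
        Li m (Complex.exp (-((2 * π : ℝ) : ℂ) * ((u : ℂ) - ξ / x) * τ +
          2 * π * Complex.I * (η - ξ * y / x))) *
        (Complex.tanh (π * (τ - Complex.I * y) / x))⁻¹) := by
  have hsub := integral_comp_mul_left_Ioi' (Jfun m n (u * x) (u * y) ξ η) 0 hu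
  rw [mul_zero] at hsub
  simp_rw [J, ← hsub, Jfun_mul_mul_apply_mul m n hx y ξ η hu.ne', integral_const_mul,
    Complex.real_smul]
  ring

theorem J_eq_integral (m n : ℕ) {x : ℂ} (hx : x ≠ 0) (y ξ η : ℂ) :
    J m n x y ξ η = (-1) ^ (n + m + 1) * ∫ τ : ℝ in Ioi 0, (τ : ℂ) ^ n *
        Li m (Complex.exp (-((2 * π : ℝ) : ℂ) * (((1 : ℝ) : ℂ) - ξ / x) * τ +
          2 * π * Complex.I * (η - ξ * y / x))) *
        (Complex.tanh (π * (τ - Complex.I * y) / x))⁻¹ := by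
  simpa using J_mul_mul m n hx y ξ η one_pos

end Rescaling

theorem exp_two_mul_ne_one_of_forall_notMem_nonnegRealAxis {x y : ℂ} (hx : x ≠ 0)
    (hray : ∀ k : ℤ, Complex.I * (y + k * x) ∉ nonnegRealAxis) {t : ℝ} (ht : 0 ≤ t) :
    Complex.exp (2 * (π * (t - Complex.I * y) / x)) ≠ 1 := by
  rw [Ne, Complex.exp_eq_one_iff]
  rintro ⟨k, hk⟩
  refine hray k ⟨t, ht, ?_⟩
  have hπ : (π : ℂ) ≠ 0 := by exact_mod_cast pi_ne_zero
  field_simp at hk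
  linear_combination -hk

theorem exists_norm_inv_tanh_le_of_forall_notMem_nonnegRealAxis {x y : ℂ} (hx : x ≠ 0)
    (hray : ∀ k : ℤ, Complex.I * (y + k * x) ∉ nonnegRealAxis) :
    ∃ C, ∀ t : ℝ, 0 ≤ t → ‖(Complex.tanh (π * (t - Complex.I * y) / x))⁻¹‖ ≤ C := by
  have harg (t : ℝ) : π / x * t + -(π * Complex.I * y / x) = π * (t - Complex.I * y) / x := by
    ring
  simpa only [harg] using exists_norm_inv_tanh_le (π / x) (-(π * Complex.I * y / x))
    fun t ht => harg t ▸ exp_two_mul_ne_one_of_forall_notMem_nonnegRealAxis hx hray ht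

theorem stmt8 (m n : ℕ) (hm : 1 ≤ m) (x y ξ η : ℂ) (hx : x ≠ 0)
    (hξ : (ξ / x).re < 1) (hη : 0 < (η - ξ * y / x).im)
    (hray : ∀ k : ℤ, Complex.I * (y + (k : ℂ) * x) ∉ nonnegRealAxis) :
    HasDerivAt (fun u : ℝ => J m n ((u : ℂ) * x) ((u : ℂ) * y) ξ η)
      (((n : ℂ) + 1) * J m n x y ξ η - 2 * (π : ℂ) * J (m - 1) (n + 1) x y ξ η) 1 := by
  set K : ℂ := 2 * π * Complex.I * (η - ξ * y / x)
  have hK : K.re < 0 := by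
    rw [show K = ((2 * π : ℝ) : ℂ) * (Complex.I * (η - ξ * y / x)) by push_cast; ring,
      Complex.re_ofReal_mul, Complex.I_mul_re]
    nlinarith [pi_pos]
  set g : ℝ → ℂ := fun τ => (Complex.tanh (π * (τ - Complex.I * y) / x))⁻¹
  obtain ⟨C, hC⟩ := exists_norm_inv_tanh_le_of_forall_notMem_nonnegRealAxis hx hray
  have hg : Measurable g := by
    simp only [g, Complex.tanh_eq_sinh_div_cosh, inv_div]
    fun_prop
  have hderiv := hasDerivAt_integral_pow_mul_Li_exp_affine (p := m) (by exact_mod_cast hm) n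
    hg.aestronglyMeasurable (fun t ht => hC t ht.le) hK (a := 2 * π) (ζ := ξ / x) (u₀ := 1)
    (by nlinarith [pi_pos])
  have hJ : (fun u : ℝ => J m n ((u : ℂ) * x) ((u : ℂ) * y) ξ η) =ᶠ[nhds 1] fun u : ℝ =>
      (-1) ^ (n + m + 1) * ((u : ℂ) ^ (n + 1) * ∫ τ : ℝ in Set.Ioi 0, (τ : ℂ) ^ n *
        Li m (Complex.exp (-((2 * π : ℝ) : ℂ) * ((u : ℂ) - ξ / x) * τ + K)) * g τ) := by
    filter_upwards [lt_mem_nhds one_pos] with u hu using J_mul_mul m n hx y ξ η hu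
  refine ((((hasDerivAt_pow (n + 1) ((1 : ℝ) : ℂ)).comp_ofReal.mul hderiv).const_mul _)
    |>.congr_of_eventuallyEq hJ).congr_deriv ?_
  rw [J_eq_integral m n hx, J_eq_integral (m - 1) (n + 1) hx,
    show n + 1 + (m - 1) + 1 = n + m + 1 by omega, Nat.cast_sub hm]
  push_cast
  ring
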